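/- Set Q = ½(1 + π₁(e)) = diag(½(1+W), ½(1−W)), a bounded operator on H (the image of the projection P₁ = ½(1+e)). Then for every integer k ≥ 1, γ ∘ Q ∘ (F₁∘Q − Q∘F₁)^{2k} = (−1)^k · diag(P₀, 0). (This operator identity yields that the Chern character of the even Fredholm module (H, π₁, F₁, γ) pairs to 1 with the K-theory class of P₁.) -/

import Mathlib

noncomputable section

open ContinuousLinearMap

/-- The Hilbert space `ℓ²(ℤ)` of square-summable complex sequences. -/
abbrev H : Type := lp (fun _ : ℤ => ℂ) 2

/-- The standard orthonormal basis vector `eₙ` of `ℓ²(ℤ)`. -/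
def eb (n : ℤ) : H := lp.single 2 n 1

/-- `sign n = 1` for `n ≥ 0` and `−1` for `n < 0`, as a complex scalar. -/
def sgn (n : ℤ) : ℂ := if 0 ≤ n then 1 else -1

/-- The Hilbert space `H = ℓ²(ℤ) ⊕ ℓ²(ℤ)` (with the `ℓ²`-direct sum structure). -/
abbrev H2 : Type := WithLp 2 (H × H)

/-- The identification `H2 ≃ H × H`. -/
def eqv : H2 ≃L[ℂ] H × H := WithLp.prodContinuousLinearEquiv 2 ℂ H H

/-- The 2×2 block operator `[[A, B], [C, D]]` on `H2 = ℓ²(ℤ) ⊕ ℓ²(ℤ)`. -/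
def blk (A B C D : H →L[ℂ] H) : H2 →L[ℂ] H2 :=
  (eqv.symm : (H × H) →L[ℂ] H2) ∘L
    ((ContinuousLinearMap.inl ℂ H H ∘L
        (A ∘L ContinuousLinearMap.fst ℂ H H + B ∘L ContinuousLinearMap.snd ℂ H H)) +
      (ContinuousLinearMap.inr ℂ H H ∘L
        (C ∘L ContinuousLinearMap.fst ℂ H H + D ∘L ContinuousLinearMap.snd ℂ H H))) ∘L
    (eqv : H2 →L[ℂ] H × H)


lemma blk_apply (A B C D : H →L[ℂ] H) (x : H2) :
    blk A B C D x = eqv.symm (A (eqv x).1 + B (eqv x).2, C (eqv x).1 + D (eqv x).2) := by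
  simp only [blk, coe_comp', Function.comp_apply, add_apply, coe_comp', comp_apply,
    inl_apply, inr_apply, coe_fst', coe_snd']
  rw [Prod.mk_add_mk, add_zero, zero_add]
  rfl

lemma eb_ext {T1 T2 : H →L[ℂ] H} (h : ∀ n, T1 (eb n) = T2 (eb n)) : T1 = T2 := by
  refine ContinuousLinearMap.ext fun ξ => ?_
  have hs := lp.hasSum_single (E := fun _ : ℤ => ℂ) (p := 2) (by norm_num) ξ
  have key : ∀ n : ℤ, T1 (lp.single 2 n (ξ n)) = T2 (lp.single 2 n (ξ n)) := by
    intro n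
    have : lp.single 2 n (ξ n) = (ξ n) • eb n := by
      rw [eb, ← lp.single_smul]; norm_num
    rw [this, map_smul, map_smul, h n]
  have h1 := hs.mapL T1
  have h2 := hs.mapL T2
  rw [funext key] at h1
  exact h1.unique h2

section blkalg
variable (A B C D A' B' C' D' : H →L[ℂ] H)

lemma symm_add (a b : H × H) : eqv.symm a + eqv.symm b = eqv.symm (a + b) := by
  rw [map_add]

lemma blk_add : blk A B C D + blk A' B' C' D' = blk (A+A') (B+B') (C+C') (D+D') := by
  refine ContinuousLinearMap.ext fun x => ?_
  simp only [add_apply, blk_apply, symm_add, Prod.mk_add_mk]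
  congr 1
  simp only [Prod.ext_iff]
  constructor <;> abel

lemma blk_smul (c : ℂ) : c • blk A B C D = blk (c•A) (c•B) (c•C) (c•D) := by
  refine ContinuousLinearMap.ext fun x => ?_
  simp only [smul_apply, blk_apply, ← map_smul, Prod.smul_mk, smul_add]

lemma blk_comp : blk A B C D ∘L blk A' B' C' D' =
    blk (A ∘L A' + B ∘L C') (A ∘L B' + B ∘L D') (C ∘L A' + D ∘L C') (C ∘L B' + D ∘L D') := by
  refine ContinuousLinearMap.ext fun x => ?_
  simp only [comp_apply, blk_apply, ContinuousLinearEquiv.apply_symm_apply, map_add, add_apply,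
    comp_apply]
  congr 1
  simp only [Prod.ext_iff]
  constructor <;> abel

lemma blk_one : blk 1 0 0 1 = (1 : H2 →L[ℂ] H2) := by
  refine ContinuousLinearMap.ext fun x => ?_
  simp only [blk_apply, one_apply, zero_apply, add_zero, zero_add]
  exact eqv.symm_apply_apply x

end blkalg


lemma blk_sub (A B C D A' B' C' D' : H →L[ℂ] H) :
    blk A B C D - blk A' B' C' D' = blk (A-A') (B-B') (C-C') (D-D') := by
  rw [sub_eq_add_neg, (neg_one_smul ℂ (blk A' B' C' D')).symm,
    blk_smul, blk_add]
  simp [neg_one_smul, ← sub_eq_add_neg]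

lemma eb_apply_zero (n : ℤ) : (eb n : ∀ _ : ℤ, ℂ) 0 = if n = 0 then 1 else 0 := by
  rcases eq_or_ne n 0 with h | h
  · subst h; simp [eb, lp.single_apply_self]
  · rw [eb, lp.single_apply_ne 2 n _ (by omega)]
    simp [h]


set_option maxHeartbeats 1000000 in
/-- Let `Q = ½(1 + π₁(e)) = diag(½(1+W), ½(1−W))` on `H = ℓ²(ℤ) ⊕ ℓ²(ℤ)` (the image of
the projection `P₁ = ½(1+e)`), with `π₁(e) = diag(W, −W)`, `F₁ = [[0, iF], [−iF, 0]]` and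
`γ = diag(1, −1)`.  Then for every integer `k ≥ 1`,
`γ ∘ Q ∘ (F₁∘Q − Q∘F₁)^(2k) = (−1)ᵏ · diag(P₀, 0)`, where `P₀ : ξ ↦ ⟨ξ, e₀⟩ e₀` is the
orthogonal projection onto the span of `e₀`. -/
theorem gamma_Q_commutator_power (S W F P0 : H →L[ℂ] H)
    (hS : ∀ n : ℤ, S (eb n) = eb (n + 1))
    (hW : ∀ n : ℤ, W (eb n) = eb (-n))
    (hF : ∀ n : ℤ, F (eb n) = sgn n • eb n)
    (hP0 : ∀ ξ : H, P0 ξ = (inner ℂ (eb 0) ξ : ℂ) • eb 0) :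
    ∀ k : ℕ, 1 ≤ k →
      blk 1 0 0 (-1) ∘L ((2 : ℂ)⁻¹ • (1 + blk W 0 0 (-W))) ∘L
          ((blk 0 (Complex.I • F) (-(Complex.I • F)) 0 ∘L ((2 : ℂ)⁻¹ • (1 + blk W 0 0 (-W))) -
            ((2 : ℂ)⁻¹ • (1 + blk W 0 0 (-W))) ∘L
              blk 0 (Complex.I • F) (-(Complex.I • F)) 0) ^ (2 * k)) =
        ((-1 : ℂ) ^ k) • blk P0 0 0 0 := by
  intro k hk
  have hP0eb : ∀ n : ℤ, P0 (eb n) = if n = 0 then eb 0 else 0 := by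
    intro n
    rw [hP0]
    have : (inner ℂ (eb 0) (eb n) : ℂ) = if n = 0 then 1 else 0 := by
      rw [show (eb 0 : H) = lp.single 2 (0:ℤ) (1:ℂ) from rfl, lp.inner_single_left]
      simp [RCLike.inner_apply, eb_apply_zero]
    rw [this]
    split <;> simp
  have hW0 : W (eb 0) = eb 0 := by simpa using hW 0
  have hsgn : ∀ n : ℤ, n ≠ 0 → sgn (-n) = - sgn n := by
    intro n hn
    unfold sgn
    split_ifs with h1 h2 <;> first | (exfalso; omega) | norm_num
  set a : H →L[ℂ] H := (2:ℂ)⁻¹ • (1 + W) with ha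
  set d : H →L[ℂ] H := (2:ℂ)⁻¹ • (1 - W) with hd
  set X : H →L[ℂ] H := Complex.I • F with hX
  -- Q in block form
  have hQd : (2 : ℂ)⁻¹ • (1 + blk W 0 0 (-W)) = blk a 0 0 d := by
    rw [show (1 : H2 →L[ℂ] H2) = blk 1 0 0 1 from blk_one.symm, blk_add, blk_smul]
    congr 1 <;> simp [ha, hd, sub_eq_add_neg]
  -- the two nonzero entries of the commutator
  have hB : X ∘L d - a ∘L X = (-Complex.I) • P0 := by
    refine eb_ext fun n => ?_
    rcases eq_or_ne n 0 with h | h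
    · subst h
      simp only [sub_apply, comp_apply, hX, ha, hd, smul_apply, add_apply, one_apply_eq_self,
        map_smul, map_sub, map_add, hW, hF, hP0eb, neg_zero, sgn, if_pos le_rfl, if_true]
      module
    · have hsn := hsgn n h
      simp only [sub_apply, comp_apply, hX, ha, hd, smul_apply, add_apply, one_apply_eq_self,
        map_smul, map_sub, map_add, hW, hF, hP0eb, if_neg h, hsn, smul_zero]
      module
  have hC : (-X) ∘L a - d ∘L (-X) = (-Complex.I) • P0 := by
    refine eb_ext fun n => ?_
    rcases eq_or_ne n 0 with h | h
    · subst h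
      simp only [sub_apply, comp_apply, hX, ha, hd, neg_apply, smul_apply, add_apply,
        one_apply_eq_self, map_smul, map_sub, map_add, map_neg, hW, hF, hP0eb, neg_zero,
        sgn, if_pos le_rfl, if_true]
      module
    · have hsn := hsgn n h
      simp only [sub_apply, comp_apply, hX, ha, hd, neg_apply, smul_apply, add_apply,
        one_apply_eq_self, map_smul, map_sub, map_add, map_neg, hW, hF, hP0eb, if_neg h, hsn,
        smul_zero]
      module
  have hT : blk 0 X (-X) 0 ∘L blk a 0 0 d - blk a 0 0 d ∘L blk 0 X (-X) 0 =
      blk 0 ((-Complex.I) • P0) ((-Complex.I) • P0) 0 := by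
    rw [blk_comp, blk_comp, blk_sub]
    simp only [zero_comp, comp_zero, add_zero, zero_add, zero_sub, sub_zero, sub_self,
      neg_zero]
    rw [hB, hC]
  have hPP : P0 ∘L P0 = P0 := by
    refine ContinuousLinearMap.ext fun ξ => ?_
    rw [comp_apply, hP0 ξ, map_smul, hP0eb 0, if_pos rfl]
  -- the square of the commutator
  have hc2 : ((-Complex.I) • P0) ∘L ((-Complex.I) • P0) = (-1 : ℂ) • P0 := by
    rw [smul_comp, comp_smul, hPP, smul_smul]
    norm_num [Complex.I_mul_I]
  have hT2 : (blk 0 ((-Complex.I) • P0) ((-Complex.I) • P0) 0) ^ 2 =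
      (-1 : ℂ) • blk P0 0 0 P0 := by
    rw [pow_two, mul_def, blk_comp, hc2, blk_smul]
    simp
  -- powers of the projection
  have hDpow : ∀ m : ℕ, 1 ≤ m → (blk P0 0 0 P0) ^ m = blk P0 0 0 P0 := by
    intro m hm
    induction m with
    | zero => omega
    | succ n ih =>
      rcases Nat.eq_or_lt_of_le hm with h | h
      · rw [← h, pow_one]
      · rw [pow_succ, ih (by omega), mul_def, blk_comp]
        simp [hPP]
  have haP0 : a ∘L P0 = P0 := by
    refine ContinuousLinearMap.ext fun ξ => ?_
    rw [comp_apply, hP0 ξ, ha]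
    simp only [map_smul, smul_apply, add_apply, one_apply_eq_self, hW0]
    module
  have hdP0 : d ∘L P0 = 0 := by
    refine ContinuousLinearMap.ext fun ξ => ?_
    rw [comp_apply, hP0 ξ, hd]
    simp only [map_smul, smul_apply, sub_apply, one_apply_eq_self, hW0, sub_self, smul_zero,
      zero_apply]
  rw [hQd, hT, pow_mul, hT2, smul_pow, hDpow k hk, comp_smul, comp_smul, blk_comp, blk_comp]
  simp [haP0, hdP0, ContinuousLinearMap.one_def]


end
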